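/- Suppose G is connected and M is nonempty. If a state ψ is stationary under the SKW operator U' (U'ψ = ψ), then ψ is orthogonal to the initial uniform state: ⟨ψ₀, ψ⟩ = 0. -/
import Mathlib


open Finset

variable {V : Type*} [Fintype V] [DecidableEq V]

/-- The average of the amplitudes of the state `ψ` at vertex `a`:
`avg_ψ(a) = (1/deg a) * ∑_{b ~ a} ψ(a,b)`. -/
noncomputable def avgQ (G : SimpleGraph V) [DecidableRel G.Adj] (ψ : V → V → ℂ) (a : V) : ℂ :=
  (G.degree a : ℂ)⁻¹ * ∑ b ∈ G.neighborFinset a, ψ a b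

/-- The SKW coin `C'`: applies `-I` at marked vertices and the Grover coin elsewhere. -/
noncomputable def CopSKW (G : SimpleGraph V) [DecidableRel G.Adj] (M : Finset V)
    (ψ : V → V → ℂ) : V → V → ℂ :=
  fun a b => if a ∈ M then -ψ a b else 2 * avgQ G ψ a - ψ a b

/-- The flip-flop shift `S`. -/
def Sop (ψ : V → V → ℂ) : V → V → ℂ :=
  fun a b => ψ b a

/-- The SKW search operator `U' = S ∘ C'`. -/
noncomputable def UopSKW (G : SimpleGraph V) [DecidableRel G.Adj] (M : Finset V)
    (ψ : V → V → ℂ) : V → V → ℂ :=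
  Sop (CopSKW G M ψ)

/-- A state is stationary under the SKW operator `U'` if `U'ψ = ψ` on every dart of `G`. -/
def StationarySKW (G : SimpleGraph V) [DecidableRel G.Adj] (M : Finset V)
    (ψ : V → V → ℂ) : Prop :=
  ∀ a b, G.Adj a b → UopSKW G M ψ a b = ψ a b

/-- The inner product of two states, summing over all darts of `G`. -/
noncomputable def dInner (G : SimpleGraph V) [DecidableRel G.Adj] (φ ψ : V → V → ℂ) : ℂ :=
  ∑ a : V, ∑ b ∈ G.neighborFinset a, (starRingEnd ℂ) (φ a b) * ψ a b

/-- The initial uniform state, assigning `1/√(2|E|)` to every dart. -/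
noncomputable def psi0 (G : SimpleGraph V) [DecidableRel G.Adj] : V → V → ℂ :=
  fun _ _ => (((Real.sqrt (2 * (G.edgeFinset.card : ℝ)))⁻¹ : ℝ) : ℂ)

/-- For a connected graph with a nonempty marked set, any state stationary under the SKW
operator is orthogonal to the initial uniform state. -/
theorem skw_stationary_orthogonal_initial (G : SimpleGraph V) [DecidableRel G.Adj]
    (M : Finset V) (hdeg : ∀ v, 0 < G.degree v) (hconn : G.Connected) (hM : M.Nonempty)
    (ψ : V → V → ℂ) (hstat : StationarySKW G M ψ) :
    dInner G (psi0 G) ψ = 0 := by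
  have key : ∀ a b, G.Adj a b → ψ a b =
      if b ∈ M then -ψ b a else 2 * avgQ G ψ b - ψ b a := by
    intro a b hab
    have h := hstat a b hab
    simpa [UopSKW, Sop, CopSKW] using h.symm
  have step : ∀ u v : V, G.Adj u v → (u ∈ M ∨ avgQ G ψ u = 0) →
      (v ∈ M ∨ avgQ G ψ v = 0) := by
    intro u v huv hQ
    by_cases hv : v ∈ M
    · exact Or.inl hv
    · right
      have h1 : ψ u v = 2 * avgQ G ψ v - ψ v u := by
        simpa [hv] using key u v huv
      have h2 : ψ v u = -ψ u v := by
        by_cases hu : u ∈ M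
        · simpa [hu] using key v u huv.symm
        · have hu0 : avgQ G ψ u = 0 := hQ.resolve_left hu
          simpa [hu, hu0] using key v u huv.symm
      linear_combination (h2 - h1) / 2
  obtain ⟨m, hm⟩ := hM
  have walkprop : ∀ u v : V, G.Walk u v → (u ∈ M ∨ avgQ G ψ u = 0) →
      (v ∈ M ∨ avgQ G ψ v = 0) := by
    intro u v w
    induction w with
    | nil => exact id
    | cons hadj p ih => exact fun h => ih (step _ _ hadj h)
  have Qall : ∀ v : V, v ∈ M ∨ avgQ G ψ v = 0 := by
    intro v
    obtain ⟨w⟩ := hconn m v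
    exact walkprop m v w (Or.inl hm)
  have antisym : ∀ a b, G.Adj a b → ψ a b = -ψ b a := by
    intro a b hab
    by_cases hb : b ∈ M
    · simpa [hb] using key a b hab
    · have hb0 : avgQ G ψ b = 0 := (Qall b).resolve_left hb
      simpa [hb, hb0] using key a b hab
  set T : ℂ := ∑ a : V, ∑ b ∈ G.neighborFinset a, ψ a b with hT
  have hswap : T = ∑ a : V, ∑ b ∈ G.neighborFinset a, ψ b a := by
    rw [hT]
    rw [Finset.sum_comm' (s' := fun v => G.neighborFinset v) (t' := Finset.univ)]
    intro a b
    simp [SimpleGraph.mem_neighborFinset, SimpleGraph.adj_comm]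
  have hTneg : T = -T := by
    calc T = ∑ a : V, ∑ b ∈ G.neighborFinset a, -ψ b a := by
            rw [hT]
            refine Finset.sum_congr rfl fun a _ => Finset.sum_congr rfl fun b hb => ?_
            exact antisym a b (by simpa [SimpleGraph.mem_neighborFinset] using hb)
      _ = -(∑ a : V, ∑ b ∈ G.neighborFinset a, ψ b a) := by simp
      _ = -T := by rw [← hswap]
  have hT0 : T = 0 := by linear_combination hTneg / 2
  unfold dInner psi0
  simp only [Complex.conj_ofReal, ← Finset.mul_sum]
  rw [← hT, hT0, mul_zero]
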